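/- arXiv:1410.3379 — 3 statements merged into one kernel-verified Lean document; each statement's English description precedes it below -/
import Mathlib

section
/- Linear growth of one-sided measures: if w ∈ A_1^+, then there is a constant C such that for every a ∈ ℝ, h > 0, and λ > 1, w([a - λh, a]) ≤ C λ w([a - h, a]). -/
open MeasureTheory

/-- `w ∈ A₁⁺` with constant `C`: `M⁻w ≤ C w` a.e. -/
def A1PlusWith (w : ℝ → ℝ) (C : ℝ) : Prop :=
  ∀ᵐ x : ℝ, ∀ h : ℝ, 0 < h →
    (1 / h) * ∫ y in Set.Ioc (x - h) x, w y ≤ C * w x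

/-!
For `x ∈ (a - h, a]` the `A₁⁺` condition, applied to the interval `(a - λh, x]` of length at most
`λh`, gives `w((a - λh, a - h]) ≤ w((a - λh, x]) ≤ C λh w(x)`. Averaging over `x ∈ (a - h, a]`
yields `w((a - λh, a - h]) ≤ C λ w((a - h, a])`, and adding `w((a - h, a])` gives the bound
with constant `C + 1`.
-/

theorem const_mul_measureReal_le_setIntegral {α : Type*} [MeasurableSpace α] {μ : Measure α}
    {s : Set α} {f : α → ℝ} {c : ℝ} (hs : μ s ≠ ⊤) (hf : IntegrableOn f s μ)
    (hcf : ∀ᵐ x ∂μ.restrict s, c ≤ f x) : c * μ.real s ≤ ∫ x in s, f x ∂μ := by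
  calc c * μ.real s = ∫ _ in s, c ∂μ := by rw [setIntegral_const, smul_eq_mul, mul_comm]
    _ ≤ ∫ x in s, f x ∂μ := integral_mono_ae (integrableOn_const hs) hf hcf

namespace A1PlusWith

variable {w : ℝ → ℝ} {C : ℝ}

theorem mono {C' : ℝ} (hw : ∀ x, 0 ≤ w x) (hA : A1PlusWith w C) (hC : C ≤ C') :
    A1PlusWith w C' := by
  filter_upwards [hA] with x hx h hh
  exact (hx h hh).trans (mul_le_mul_of_nonneg_right hC (hw x))

theorem setIntegral_Ioc_le (hA : A1PlusWith w C) :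
    ∀ᵐ x, ∀ t < x, ∫ y in Set.Ioc t x, w y ≤ C * (x - t) * w x := by
  filter_upwards [hA] with x hx t ht
  have hlen : 0 < x - t := sub_pos.2 ht
  have := hx (x - t) hlen
  rw [sub_sub_cancel, one_div, inv_mul_le_iff₀ hlen] at this
  linarith

theorem mul_setIntegral_Ioc_le (hw : ∀ x, 0 ≤ w x) (hC : 0 ≤ C) (hA : A1PlusWith w C)
    {b m a : ℝ} (hbm : b ≤ m) (hma : m ≤ a) (hint : IntegrableOn w (Set.Ioc b a)) :
    (∫ y in Set.Ioc b m, w y) * (a - m) ≤ C * (a - b) * ∫ y in Set.Ioc m a, w y := by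
  have hint_ma : IntegrableOn w (Set.Ioc m a) := hint.mono_set (Set.Ioc_subset_Ioc_left hbm)
  have hpointwise : ∀ᵐ x ∂volume.restrict (Set.Ioc m a),
      ∫ y in Set.Ioc b m, w y ≤ C * (a - b) * w x := by
    filter_upwards [ae_restrict_of_ae hA.setIntegral_Ioc_le,
      ae_restrict_mem measurableSet_Ioc] with x hx ⟨hmx, hxa⟩
    calc ∫ y in Set.Ioc b m, w y
        ≤ ∫ y in Set.Ioc b x, w y :=
          setIntegral_mono_set (hint.mono_set (Set.Ioc_subset_Ioc_right hxa))
            (.of_forall hw) (Set.Ioc_subset_Ioc_right hmx.le).eventuallyLE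
      _ ≤ C * (x - b) * w x := hx b (hbm.trans_lt hmx)
      _ ≤ C * (a - b) * w x := by gcongr; exact hw x
  have := const_mul_measureReal_le_setIntegral (by simp) (hint_ma.const_mul (C * (a - b)))
    hpointwise
  rwa [Real.volume_real_Ioc_of_le hma, integral_const_mul] at this

theorem setIntegral_Ioc_le_mul (hw : ∀ x, 0 ≤ w x) (hC : 0 ≤ C) (hA : A1PlusWith w C)
    {a h lam : ℝ} (hh : 0 < h) (hlam : 1 ≤ lam)
    (hint : IntegrableOn w (Set.Ioc (a - lam * h) a)) :
    ∫ y in Set.Ioc (a - lam * h) a, w y ≤ (C + 1) * lam * ∫ y in Set.Ioc (a - h) a, w y := by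
  have hbm : a - lam * h ≤ a - h := by nlinarith
  have hma : a - h ≤ a := by linarith
  have hsplit : ∫ y in Set.Ioc (a - lam * h) a, w y
      = (∫ y in Set.Ioc (a - lam * h) (a - h), w y) + ∫ y in Set.Ioc (a - h) a, w y := by
    rw [← Set.Ioc_union_Ioc_eq_Ioc hbm hma] at hint ⊢
    exact setIntegral_union (Set.Ioc_disjoint_Ioc_of_le le_rfl) measurableSet_Ioc
      (hint.mono_set Set.subset_union_left) (hint.mono_set Set.subset_union_right)
  have hleft : ∫ y in Set.Ioc (a - lam * h) (a - h), w y
      ≤ C * lam * ∫ y in Set.Ioc (a - h) a, w y := by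
    have := hA.mul_setIntegral_Ioc_le hw hC hbm hma hint
    rw [sub_sub_cancel, sub_sub_cancel] at this
    exact le_of_mul_le_mul_right (by linarith) hh
  have hI : 0 ≤ ∫ y in Set.Ioc (a - h) a, w y :=
    setIntegral_nonneg measurableSet_Ioc fun y _ ↦ hw y
  rw [hsplit]
  linarith [le_mul_of_one_le_left hI hlam]

end A1PlusWith

/-- Linear growth of one-sided measures: if `w ∈ A₁⁺`, then
`w([a - λh, a]) ≤ C λ w([a - h, a])` for all `a ∈ ℝ`, `h > 0`, `λ > 1`. -/
theorem A1Plus_linear_growth (w : ℝ → ℝ) (hw : ∀ x, 0 ≤ w x)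
    (C₀ : ℝ) (hA : A1PlusWith w C₀) :
    ∃ C : ℝ, 0 < C ∧ ∀ a h lam : ℝ, 0 < h → 1 < lam →
      ∫ x in Set.Icc (a - lam * h) a, w x ≤ C * lam * ∫ x in Set.Icc (a - h) a, w x := by
  have hA' : A1PlusWith w (max C₀ 0) := hA.mono hw (le_max_left _ _)
  refine ⟨max C₀ 0 + 1, by positivity, fun a h lam hh hlam ↦ ?_⟩
  simp only [integral_Icc_eq_integral_Ioc]
  by_cases hint : IntegrableOn w (Set.Ioc (a - lam * h) a)
  · exact hA'.setIntegral_Ioc_le_mul hw (le_max_right _ _) hh hlam.le hint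
  · rw [integral_undef hint]
    have hI : 0 ≤ ∫ x in Set.Ioc (a - h) a, w x :=
      setIntegral_nonneg measurableSet_Ioc fun x _ ↦ hw x
    positivity
end

section
/- Sublevel set estimate for polynomials (Ricci–Stein): let Q(x) = Σ_{α ≤ d} q_α x^α be a real polynomial of degree d, and suppose 0 < ε < 1/d. Then ∫_{|x| ≤ 1} |Q(x)|^{-ε} dx ≤ A_ε (Σ_{α ≤ d} |q_α|)^{-ε}, where A_ε depends only on ε and d, not on the coefficients of Q. -/
/-!
If the sublevel set `{x ∈ [-1, 1] : |Q x| ≤ l}` has measure `δ`, it contains `d + 1` points that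
are `δ / (2 (d + 1))`-separated. Lagrange interpolation through them bounds `|Q|` by `l (C / δ) ^ d`
on `[0, d]`, and interpolation at the nodes `0, …, d` bounds the coefficients by these values, so
`δ ^ d ∑ |q_α| ≤ C l`. Hence `|{|Q| ^ (-ε) > t}| ≤ (C / ∑ |q_α|) ^ (1 / d) t ^ (-1 / (ε d))`, an
integrable tail because `ε d < 1`, and the layer-cake formula split at `t = (∑ |q_α|) ^ (-ε)`
gives the bound.
-/

open MeasureTheory Polynomial Finset

theorem exists_separated_of_ofReal_lt_volume (n : ℕ) {E : Set ℝ} {s : ℝ} (hs : 0 ≤ s)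
    (hE : ENNReal.ofReal (2 * n * s) < volume E) :
    ∃ p : Fin (n + 1) → ℝ, (∀ i, p i ∈ E) ∧ Pairwise fun i j => s ≤ |p i - p j| := by
  induction n generalizing E with
  | zero =>
    obtain ⟨x, hx⟩ := nonempty_of_measure_ne_zero (pos_of_gt hE).ne'
    exact ⟨fun _ => x, fun _ => hx,
      fun i j hij => (hij (Subsingleton.elim (α := Fin 1) i j)).elim⟩
  | succ n ih =>
    obtain ⟨x, hx⟩ := nonempty_of_measure_ne_zero (pos_of_gt hE).ne'
    have hcover : volume E ≤ volume (E \ Metric.ball x s) + ENNReal.ofReal (2 * s) := by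
      rw [← Real.volume_ball x s]
      exact tsub_le_iff_right.1 le_measure_sdiff
    have hrest : ENNReal.ofReal (2 * n * s) < volume (E \ Metric.ball x s) := by
      refine lt_of_add_lt_add_right (a := ENNReal.ofReal (2 * s))
        (hE.trans_le' ?_ |>.trans_le hcover)
      rw [← ENNReal.ofReal_add (by positivity) (by positivity)]
      exact le_of_eq (congrArg _ (by push_cast; ring))
    obtain ⟨p, hpE, hpsep⟩ := ih hrest
    have hfar : ∀ i, s ≤ |p i - x| := fun i => by
      simpa [Metric.mem_ball, Real.dist_eq] using (hpE i).2
    refine ⟨Fin.cons x p, Fin.cases hx fun i => (hpE i).1, ?_⟩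
    intro i j hij
    cases i using Fin.cases <;> cases j using Fin.cases
    · exact (hij rfl).elim
    · simpa [abs_sub_comm] using hfar _
    · simpa using hfar _
    · exact hpsep (fun h => hij (congrArg Fin.succ h))

section Lagrange

variable {ι : Type*} [DecidableEq ι] {s : Finset ι} {v : ι → ℝ} {δ B x : ℝ}

theorem abs_eval_lagrangeBasis_le (hδ : 0 < δ) {i : ι} (hi : i ∈ s)
    (hsep : ∀ j ∈ s, j ≠ i → δ ≤ |v i - v j|) (hB : ∀ j ∈ s, |x - v j| ≤ B) :
    |(Lagrange.basis s v i).eval x| ≤ (B / δ) ^ (#s - 1) := by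
  rw [Lagrange.basis, eval_prod, abs_prod, ← card_erase_of_mem hi, ← prod_const]
  refine prod_le_prod (fun _ _ => abs_nonneg _) fun j hj => ?_
  obtain ⟨hji, hj⟩ := mem_erase.mp hj
  rw [Lagrange.basisDivisor, eval_mul, eval_C, eval_sub, eval_X, eval_C, abs_mul, abs_inv,
    inv_mul_eq_div]
  exact div_le_div₀ ((abs_nonneg _).trans (hB j hj)) (hB j hj) hδ (hsep j hj hji)

theorem abs_eval_le_of_separated (hδ : 0 < δ) (hsep : ∀ i ∈ s, ∀ j ∈ s, i ≠ j → δ ≤ |v i - v j|)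
    {Q : ℝ[X]} (hQ : Q.degree < #s) {l : ℝ} (hl : ∀ i ∈ s, |Q.eval (v i)| ≤ l)
    (hB : ∀ i ∈ s, |x - v i| ≤ B) :
    |Q.eval x| ≤ #s * l * (B / δ) ^ (#s - 1) := by
  have hinj : Set.InjOn v s := fun i hi j hj hij => by
    by_contra hne
    have := hsep i hi j hj hne
    rw [hij, sub_self, abs_zero] at this
    exact hδ.not_ge this
  rw [Lagrange.eq_interpolate hinj hQ, Lagrange.interpolate_apply, eval_finsetSum]
  calc |∑ i ∈ s, (C (Q.eval (v i)) * Lagrange.basis s v i).eval x|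
      ≤ ∑ i ∈ s, |Q.eval (v i)| * |(Lagrange.basis s v i).eval x| := by
        refine (abs_sum_le_sum_abs _ _).trans_eq (sum_congr rfl fun i _ => ?_)
        rw [eval_mul, eval_C, abs_mul]
    _ ≤ ∑ _i ∈ s, l * (B / δ) ^ (#s - 1) := by
        refine sum_le_sum fun i hi => mul_le_mul (hl i hi) ?_ (abs_nonneg _)
          ((abs_nonneg _).trans (hl i hi))
        exact abs_eval_lagrangeBasis_le hδ hi (fun j hj hji => hsep i hi j hj hji.symm) hB
    _ = #s * l * (B / δ) ^ (#s - 1) := by rw [sum_const, nsmul_eq_mul, mul_assoc]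

end Lagrange

theorem exists_sum_abs_coeff_le_of_abs_eval_natCast_le (d : ℕ) :
    ∃ C : ℝ, 0 ≤ C ∧ ∀ Q : ℝ[X], Q.natDegree ≤ d → ∀ M : ℝ,
      (∀ j ∈ range (d + 1), |Q.eval (j : ℝ)| ≤ M) → ∑ i ∈ range (d + 1), |Q.coeff i| ≤ C * M := by
  set b := Lagrange.basis (range (d + 1)) (fun j : ℕ => (j : ℝ))
  refine ⟨∑ i ∈ range (d + 1), ∑ j ∈ range (d + 1), |(b j).coeff i|, by positivity,
    fun Q hQ M hM => ?_⟩
  have hinj : Set.InjOn (fun j : ℕ => (j : ℝ)) (range (d + 1)) :=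
    fun _ _ _ _ h => Nat.cast_injective h
  have hdeg : Q.degree < #(range (d + 1)) := by
    rw [card_range]
    exact (degree_le_natDegree.trans (WithBot.coe_le_coe.mpr hQ)).trans_lt
      (WithBot.coe_lt_coe.mpr d.lt_succ_self)
  have hcoeff (i : ℕ) : Q.coeff i = ∑ j ∈ range (d + 1), Q.eval (j : ℝ) * (b j).coeff i := by
    conv_lhs => rw [Lagrange.eq_interpolate hinj hdeg, Lagrange.interpolate_apply]
    simp only [finsetSum_coeff, coeff_C_mul, b]
  rw [sum_mul]
  refine sum_le_sum fun i _ => ?_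
  rw [hcoeff i, sum_mul]
  refine (abs_sum_le_sum_abs _ _).trans (sum_le_sum fun j hj => ?_)
  rw [abs_mul, mul_comm _ M]
  exact mul_le_mul_of_nonneg_right (hM j hj) (abs_nonneg _)

theorem exists_measureReal_sublevel_pow_mul_sum_abs_coeff_le {d : ℕ} (hd : 0 < d) :
    ∃ C : ℝ, 0 ≤ C ∧ ∀ Q : ℝ[X], Q.natDegree ≤ d → ∀ l : ℝ, 0 ≤ l →
      (volume.restrict (Set.Icc (-1 : ℝ) 1)).real {x | |Q.eval x| ≤ l} ^ d *
        ∑ i ∈ range (d + 1), |Q.coeff i| ≤ C * l := by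
  obtain ⟨C₀, hC₀, hcoeff⟩ := exists_sum_abs_coeff_le_of_abs_eval_natCast_le d
  refine ⟨(2 * (d + 1)) ^ d * (d + 1) ^ (d + 1) * C₀, by positivity, fun Q hQ l hl => ?_⟩
  set μ := volume.restrict (Set.Icc (-1 : ℝ) 1)
  set E := {x | |Q.eval x| ≤ l}
  rcases (measureReal_nonneg (μ := μ) (s := E)).eq_or_lt with hδ | hδ
  · rw [← hδ, zero_pow hd.ne', zero_mul]
    positivity
  set δ := μ.real E
  set s := δ / (2 * (d + 1))
  have hs : 0 < s := by positivity
  have hδs : δ = 2 * (d + 1) * s := by simp only [s]; field_simp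
  obtain ⟨p, hpE, hpsep⟩ := exists_separated_of_ofReal_lt_volume d hs.le
    (E := E ∩ Set.Icc (-1) 1) (by
      rw [← Measure.restrict_apply' measurableSet_Icc, ← ofReal_measureReal (measure_ne_top μ E),
        ENNReal.ofReal_lt_ofReal_iff hδ, hδs]
      nlinarith)
  have hdeg : Q.degree < #(univ : Finset (Fin (d + 1))) := by
    rw [card_univ, Fintype.card_fin]
    exact (degree_le_natDegree.trans (WithBot.coe_le_coe.mpr hQ)).trans_lt
      (WithBot.coe_lt_coe.mpr d.lt_succ_self)
  have hval (j) (hj : j ∈ range (d + 1)) :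
      |Q.eval (j : ℝ)| ≤ (d + 1) * l * ((d + 1) / s) ^ d := by
    have hjd : (j : ℝ) ≤ d := by exact_mod_cast Nat.lt_succ_iff.mp (mem_range.mp hj)
    have hdist (i) : |(j : ℝ) - p i| ≤ d + 1 := by
      obtain ⟨-, h₁, h₂⟩ := hpE i
      rw [abs_le]
      constructor <;> linarith [(j.cast_nonneg : (0 : ℝ) ≤ j)]
    simpa using abs_eval_le_of_separated hs (fun i _ j _ hij => hpsep hij) hdeg
      (fun i _ => (hpE i).1) (fun i _ => hdist i)
  calc δ ^ d * ∑ i ∈ range (d + 1), |Q.coeff i|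
      ≤ (2 * (d + 1) * s) ^ d * (C₀ * ((d + 1) * l * ((d + 1) / s) ^ d)) := by
        rw [hδs]
        gcongr
        exact hcoeff Q hQ _ hval
    _ = (2 * (d + 1)) ^ d * (d + 1) ^ (d + 1) * C₀ * l := by
        rw [div_pow, mul_pow]
        field_simp
        ring

theorem integral_le_of_measureReal_lt_le_rpow {α : Type*} [MeasurableSpace α] {μ : Measure α}
    [IsFiniteMeasure μ] {f : α → ℝ} (hf : 0 ≤ᵐ[μ] f) {K p t₀ : ℝ} (hp : 1 < p) (ht₀ : 0 < t₀)
    (hK : ∀ t, t₀ < t → μ.real {a | t < f a} ≤ K * t ^ (-p)) :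
    ∫ a, f a ∂μ ≤ μ.real Set.univ * t₀ + K * t₀ ^ (1 - p) / (p - 1) := by
  have hK₀ : 0 ≤ K := by
    have h := measureReal_nonneg.trans (hK (t₀ + 1) (lt_add_one t₀))
    exact (mul_nonneg_iff_of_pos_right (Real.rpow_pos_of_pos (by linarith) _)).mp h
  by_cases hfi : Integrable f μ
  swap
  · rw [integral_undef hfi]
    have : 0 < p - 1 := by linarith
    positivity
  rw [hfi.integral_eq_integral_meas_lt hf]
  set φ := fun t => μ.real {a | t < f a}
  have hφ : Measurable φ :=
    Antitone.measurable fun s t hst => measureReal_mono fun a ha => hst.trans_lt ha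
  have htail : IntegrableOn (fun t => K * t ^ (-p)) (Set.Ioi t₀) :=
    (integrableOn_Ioi_rpow_of_lt (by linarith) ht₀).const_mul K
  have hφ_tail : IntegrableOn φ (Set.Ioi t₀) :=
    htail.mono' hφ.aestronglyMeasurable <| ae_restrict_of_forall_mem measurableSet_Ioi
      fun t ht => (Real.norm_of_nonneg measureReal_nonneg).trans_le (hK t ht)
  have hφ_head : IntegrableOn φ (Set.Ioc 0 t₀) :=
    .of_bound measure_Ioc_lt_top hφ.aestronglyMeasurable (μ.real Set.univ) <|
      Filter.Eventually.of_forall fun t =>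
        (Real.norm_of_nonneg measureReal_nonneg).trans_le (measureReal_mono (Set.subset_univ _))
  rw [← Set.Ioc_union_Ioi_eq_Ioi ht₀.le,
    setIntegral_union Set.Ioc_disjoint_Ioi_same measurableSet_Ioi hφ_head hφ_tail]
  gcongr
  · calc ∫ t in Set.Ioc 0 t₀, φ t ≤ ‖∫ t in Set.Ioc 0 t₀, φ t‖ := Real.le_norm_self _
      _ ≤ μ.real Set.univ * volume.real (Set.Ioc 0 t₀) :=
        norm_setIntegral_le_of_norm_le_const measure_Ioc_lt_top fun t _ =>
          (Real.norm_of_nonneg measureReal_nonneg).trans_le (measureReal_mono (Set.subset_univ _))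
      _ = μ.real Set.univ * t₀ := by rw [Real.volume_real_Ioc_of_le ht₀.le, sub_zero]
  · calc ∫ t in Set.Ioi t₀, φ t ≤ ∫ t in Set.Ioi t₀, K * t ^ (-p) :=
          setIntegral_mono_on hφ_tail htail measurableSet_Ioi hK
      _ = K * t₀ ^ (1 - p) / (p - 1) := by
        rw [integral_const_mul, integral_Ioi_rpow_of_lt (by linarith) ht₀, mul_div_assoc,
          show -p + 1 = -(p - 1) by ring, neg_div_neg_eq, neg_sub]

theorem measureReal_lt_abs_rpow_neg_le {α : Type*} [MeasurableSpace α] {μ : Measure α}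
    [IsFiniteMeasure μ] {f : α → ℝ} {d : ℕ} (hd : 0 < d) {C N ε t : ℝ} (hC : 0 ≤ C)
    (hN : 0 < N) (hε : 0 < ε) (ht : 0 < t)
    (hsub : ∀ l, 0 ≤ l → μ.real {a | |f a| ≤ l} ^ d * N ≤ C * l) :
    μ.real {a | t < |f a| ^ (-ε)} ≤ (C / N) ^ (d : ℝ)⁻¹ * t ^ (-(ε * d)⁻¹) := by
  set l := t ^ (-ε)⁻¹
  have hl : 0 < l := Real.rpow_pos_of_pos ht _
  have hsubset : {a | t < |f a| ^ (-ε)} ⊆ {a | |f a| ≤ l} := fun a ha => by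
    rcases (abs_nonneg (f a)).eq_or_lt with hfa | hfa
    · exact (hfa ▸ hl.le : |f a| ≤ l)
    · exact (Real.le_rpow_inv_iff_of_neg hfa ht (neg_lt_zero.mpr hε)).mpr ha.le
  have hδ : μ.real {a | |f a| ≤ l} ≤ (C * l / N) ^ (d : ℝ)⁻¹ := by
    rw [Real.le_rpow_inv_iff_of_pos measureReal_nonneg (by positivity) (by positivity),
      Real.rpow_natCast, le_div_iff₀ hN]
    exact hsub l hl.le
  calc μ.real {a | t < |f a| ^ (-ε)} ≤ (C * l / N) ^ (d : ℝ)⁻¹ :=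
        (measureReal_mono hsubset).trans hδ
    _ = (C / N) ^ (d : ℝ)⁻¹ * t ^ (-(ε * d)⁻¹) := by
        rw [mul_div_right_comm, Real.mul_rpow (by positivity) hl.le, ← Real.rpow_mul ht.le,
          ← neg_inv, neg_mul, mul_inv]

/-- Sublevel set estimate for polynomials (Ricci–Stein): if `Q` has degree `d ≥ 1`
and `0 < ε < 1/d`, then `∫_{|x|≤1} |Q(x)|^{-ε} dx ≤ A_ε (Σ |q_α|)^{-ε}`, with
`A_ε` depending only on `ε` and `d`. -/
theorem ricci_stein_sublevel (d : ℕ) (hd : 0 < d) (ε : ℝ) (hε₀ : 0 < ε)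
    (hε : ε < 1 / (d : ℝ)) :
    ∃ A : ℝ, 0 < A ∧ ∀ Q : Polynomial ℝ, Q.natDegree = d →
      ∫ x in Set.Icc (-1 : ℝ) 1, |Q.eval x| ^ (-ε) ≤
        A * (∑ i ∈ Finset.range (d + 1), |Q.coeff i|) ^ (-ε) := by
  obtain ⟨C, hC, hsub⟩ := exists_measureReal_sublevel_pow_mul_sum_abs_coeff_le hd
  have hd' : (0 : ℝ) < d := Nat.cast_pos.mpr hd
  set p := (ε * d)⁻¹
  have hp : 1 < p := (one_lt_inv₀ (by positivity)).mpr (by rwa [lt_div_iff₀ hd'] at hε)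
  have hp' : 0 < p - 1 := sub_pos.mpr hp
  refine ⟨2 + C ^ (d : ℝ)⁻¹ / (p - 1), by positivity, fun Q hQ => ?_⟩
  set N := ∑ i ∈ range (d + 1), |Q.coeff i|
  have hN : 0 < N := by
    refine lt_of_lt_of_le ?_ (single_le_sum (fun i _ => abs_nonneg (Q.coeff i))
      (mem_range.mpr d.lt_succ_self))
    rw [abs_pos, ← hQ]
    exact leadingCoeff_ne_zero.mpr (ne_zero_of_natDegree_gt (hQ ▸ hd))
  have hK := fun t (ht : N ^ (-ε) < t) => measureReal_lt_abs_rpow_neg_le hd hC hN hε₀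
    ((Real.rpow_pos_of_pos hN _).trans ht) (hsub Q hQ.le)
  calc ∫ x in Set.Icc (-1 : ℝ) 1, |Q.eval x| ^ (-ε)
      ≤ 2 * N ^ (-ε) + (C / N) ^ (d : ℝ)⁻¹ * (N ^ (-ε)) ^ (1 - p) / (p - 1) := by
        simpa [one_add_one_eq_two] using integral_le_of_measureReal_lt_le_rpow
          (Filter.Eventually.of_forall fun x => Real.rpow_nonneg (abs_nonneg (Q.eval x)) _)
          hp (Real.rpow_pos_of_pos hN _) hK
    _ = (2 + C ^ (d : ℝ)⁻¹ / (p - 1)) * N ^ (-ε) := by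
        have hexp : -ε * (1 - p) = (d : ℝ)⁻¹ + -ε := by
          simp only [p]
          field_simp
          ring
        rw [Real.div_rpow hC hN.le, ← Real.rpow_mul hN.le, hexp, Real.rpow_add hN]
        have : 0 < N ^ (d : ℝ)⁻¹ := Real.rpow_pos_of_pos hN _
        field_simp
end

section
/- Unboundedness when P'(0) ≠ 0: let λ > 0, K(x) = (sin(log|x|)/(x log|x|)) χ_{(-∞,0)}(x), and f(x) = π^{-1} λ (χ_{[0, π/(2λ)]}(x) - χ_{[-π/(2λ), 0]}(x)). Define T^+ f(x) = p.v. ∫_x^∞ e^{iλ(x-y)} K(x-y) f(y) dy. Then ∫_ℝ |T^+ f(x)| dx = ∞; in particular T^+ f ∉ L^1(ℝ), even though f is a bounded compactly supported function with mean zero. -/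
/-!
As `x → -∞` the support `[-π/(2λ), π/(2λ)]` of `f` lies to the right of `x`, so the principal
value is an ordinary integral, and replacing `K(x - y)` by `K(x)` in it costs `O(x⁻²)` because
`|K'(t)| ≤ 3/t²`. The remaining main term is `e^{iλx} K(x) f̂(λ)` with `f̂(λ) = -2i/π ≠ 0`, so
`T⁺f ∈ L¹` would force `K` to be integrable near `-∞`. The substitution `t = -eᵘ` turns `∫ |K|`
into `∫ |sin u| / u`, which diverges: shifting by `π/2` turns `sin` into `cos`, and
`|sin u| + |cos u| ≥ 1`.
-/

open MeasureTheory

/-- The kernel `K(x) = (sin(log|x|)/(x log|x|)) χ_{(-∞,0)}(x)`. -/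
noncomputable def Kker (x : ℝ) : ℝ :=
  if x < 0 then Real.sin (Real.log |x|) / (x * Real.log |x|) else 0

/-- The function `f(x) = π⁻¹ λ (χ_{[0,π/(2λ)]}(x) - χ_{[-π/(2λ),0]}(x))`. -/
noncomputable def fosc (lam : ℝ) (x : ℝ) : ℝ :=
  (1 / Real.pi) * lam *
    (Set.indicator (Set.Icc 0 (Real.pi / (2 * lam))) (fun _ => (1 : ℝ)) x -
      Set.indicator (Set.Icc (-(Real.pi / (2 * lam))) 0) (fun _ => (1 : ℝ)) x)

open Set Filter Real Topology

theorem integrableOn_Iio_neg_iff {E : Type*} [NormedAddCommGroup E] (f : ℝ → E) (c : ℝ) :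
    IntegrableOn f (Iio (-c)) ↔ IntegrableOn (fun x => f (-x)) (Ioi c) := by
  simpa [Function.comp_def] using
    ((Measure.measurePreserving_neg volume).integrableOn_comp_preimage
      (Homeomorph.neg ℝ).measurableEmbedding (f := f) (s := Iio (-c))).symm

theorem integrableOn_Ioi_comp_add_right {E : Type*} [NormedAddCommGroup E] (f : ℝ → E)
    (a c : ℝ) : IntegrableOn (fun x => f (x + c)) (Ioi (a - c)) ↔ IntegrableOn f (Ioi a) := by
  simpa [Function.comp_def] using
    (measurePreserving_add_right volume c).integrableOn_comp_preimage
      (measurableEmbedding_addRight c) (f := f) (s := Ioi a)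

theorem one_le_abs_sin_add_abs_cos (x : ℝ) : 1 ≤ |sin x| + |cos x| := by
  nlinarith [sin_sq_add_cos_sq x, abs_sin_le_one x, abs_cos_le_one x, sq_abs (sin x),
    sq_abs (cos x), abs_nonneg (sin x), abs_nonneg (cos x)]

theorem not_integrableOn_Ioi_sin_div (a : ℝ) : ¬ IntegrableOn (fun u => sin u / u) (Ioi a) := by
  intro h
  set a' := max a 1
  have hsin : IntegrableOn (fun u => sin u / u) (Ioi a') :=
    h.mono_set (Ioi_subset_Ioi (le_max_left a 1))
  have hcos : IntegrableOn (fun u => cos u / (u + π / 2)) (Ioi a') := by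
    refine (((integrableOn_Ioi_comp_add_right _ a' (π / 2)).2 hsin).mono_set
      (Ioi_subset_Ioi (by linarith [pi_pos]))).congr_fun (fun u _ => ?_) measurableSet_Ioi
    simp only [sin_add_pi_div_two]
  refine not_integrableOn_Ioi_inv (a := a') <|
    (hsin.norm.add (hcos.norm.const_mul 3)).mono' (by fun_prop) ?_
  rw [ae_restrict_iff' measurableSet_Ioi]
  refine Eventually.of_forall fun u (hu : a' < u) => ?_
  have hu1 : 1 < u := (le_max_right a 1).trans_lt hu
  have hpi := pi_lt_four
  have hpi' := pi_pos
  simp only [Pi.add_apply, norm_inv, norm_div, Real.norm_eq_abs, abs_of_pos (by linarith : 0 < u),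
    abs_of_pos (by linarith : 0 < u + π / 2)]
  have h1 := one_le_abs_sin_add_abs_cos u
  have h2 : |cos u| / u ≤ 3 * (|cos u| / (u + π / 2)) := by
    rw [mul_div_assoc', div_le_div_iff₀ (by linarith) (by linarith)]
    nlinarith [abs_nonneg (cos u)]
  calc u⁻¹ ≤ (|sin u| + |cos u|) / u := by rw [inv_eq_one_div]; gcongr
    _ ≤ _ := by rw [add_div]; linarith

@[fun_prop]
theorem measurable_Kker : Measurable Kker :=
  Measurable.ite measurableSet_Iio (by fun_prop) measurable_const

theorem Kker_of_neg {t : ℝ} (ht : t < 0) : Kker t = sin (log (-t)) / (t * log (-t)) := by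
  rw [Kker, if_pos ht, abs_of_neg ht]

theorem not_integrableOn_Kker_Iio {c : ℝ} (hc : 0 < c) : ¬ IntegrableOn Kker (Iio (-c)) := by
  rw [integrableOn_Iio_neg_iff, ← MeasureTheory.integrableOn_neg_iff]
  have := not_integrableOn_Ioi_sin_div (log c)
  rw [← integrableOn_comp_log_Ioi _ hc] at this
  refine fun h => this (h.congr_fun (fun x (hx : c < x) => ?_) measurableSet_Ioi)
  rw [Pi.neg_apply, Kker_of_neg (by linarith), neg_neg, smul_eq_mul]
  field_simp

theorem hasDerivAt_Kker {t : ℝ} (ht : t < -1) :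
    HasDerivAt Kker ((log (-t) * cos (log (-t)) - (log (-t) + 1) * sin (log (-t))) /
      (t * log (-t)) ^ 2) t := by
  have ht0 : t ≠ 0 := by linarith
  have hlog : 0 < log (-t) := log_pos (by linarith)
  have hL : HasDerivAt (fun u => log (-u)) t⁻¹ t := by
    simpa [Function.comp_def] using (hasDerivAt_log (neg_ne_zero.2 ht0)).comp t (hasDerivAt_neg t)
  have hquot := ((hasDerivAt_sin _).comp t hL).div ((hasDerivAt_id' t).mul hL)
    (mul_ne_zero ht0 hlog.ne')
  refine (hquot.congr_deriv ?_).congr_of_eventuallyEq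
    (eventually_of_mem (Iio_mem_nhds (by linarith : t < 0)) fun u hu => Kker_of_neg hu)
  simp only [Function.comp_apply, Pi.mul_apply]
  field_simp

theorem abs_deriv_Kker_le {t : ℝ} (ht : t ≤ -exp 1) : |deriv Kker t| ≤ 3 / t ^ 2 := by
  have hL : 1 ≤ log (-t) := by rw [le_log_iff_exp_le (by linarith [exp_pos 1])]; linarith
  rw [(hasDerivAt_Kker (by linarith [add_one_le_exp 1])).deriv]
  set L := log (-t)
  have hnum : |L * cos L - (L + 1) * sin L| ≤ 3 * L ^ 2 :=
    calc |L * cos L - (L + 1) * sin L| ≤ |L| * |cos L| + |L + 1| * |sin L| := by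
          rw [← abs_mul, ← abs_mul]; exact abs_sub _ _
      _ ≤ L * 1 + (L + 1) * 1 := by
          rw [abs_of_pos (by linarith : 0 < L), abs_of_pos (by linarith : 0 < L + 1)]
          gcongr
          exacts [abs_cos_le_one L, abs_sin_le_one L]
      _ ≤ 3 * L ^ 2 := by nlinarith
  have ht2 : 0 < t ^ 2 := by nlinarith [exp_pos 1]
  rw [abs_div, abs_of_nonneg (sq_nonneg (t * L)), mul_pow, div_le_div_iff₀ (by positivity) ht2]
  nlinarith [mul_le_mul_of_nonneg_right hnum ht2.le]

theorem abs_Kker_sub_Kker_le {c s t : ℝ} (hc : exp 1 ≤ c) (hs : s ≤ -c) (ht : t ≤ -c) :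
    |Kker s - Kker t| ≤ 3 / c ^ 2 * |s - t| := by
  have hc0 : 0 < c := (exp_pos 1).trans_le hc
  have hbound : ∀ u ∈ Iic (-c), ‖deriv Kker u‖ ≤ 3 / c ^ 2 := fun u (hu : u ≤ -c) =>
    (abs_deriv_Kker_le (by linarith)).trans
      (div_le_div_of_nonneg_left (by norm_num) (by positivity) (by nlinarith))
  simpa [Real.norm_eq_abs] using (convex_Iic (-c)).norm_image_sub_le_of_norm_deriv_le
    (fun u (hu : u ≤ -c) => (hasDerivAt_Kker (by linarith [add_one_le_exp 1])).differentiableAt)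
    hbound ht hs

theorem fosc_eq_zero_of_notMem {lam y : ℝ}
    (hy : y ∉ Icc (-(π / (2 * lam))) (π / (2 * lam))) : fosc lam y = 0 := by
  have h₁ : y ∉ Icc 0 (π / (2 * lam)) := fun h => hy ⟨by linarith [h.1, h.2], h.2⟩
  have h₂ : y ∉ Icc (-(π / (2 * lam))) 0 := fun h => hy ⟨h.1, by linarith [h.1, h.2]⟩
  simp [fosc, indicator_of_notMem h₁, indicator_of_notMem h₂]

theorem abs_fosc_le {lam : ℝ} (hlam : 0 ≤ lam) (y : ℝ) : |fosc lam y| ≤ lam / π := by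
  have hc : |1 / π * lam| = lam / π := by rw [abs_of_nonneg (by positivity)]; ring
  rw [fosc, abs_mul, hc]
  refine mul_le_of_le_one_right (by positivity) ?_
  simp only [indicator_apply]
  split_ifs <;> norm_num

@[fun_prop]
theorem measurable_fosc (lam : ℝ) : Measurable (fosc lam) := by
  unfold fosc
  fun_prop (disch := exact measurableSet_Icc)

section MulFosc

variable {lam C : ℝ} {φ : ℝ → ℂ}

theorem norm_mul_fosc_le_indicator (hlam : 0 ≤ lam)
    (hφ : ∀ y ∈ Icc (-(π / (2 * lam))) (π / (2 * lam)), ‖φ y‖ ≤ C) (y : ℝ) :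
    ‖φ y * fosc lam y‖ ≤ (Icc (-(π / (2 * lam))) (π / (2 * lam))).indicator
      (fun _ => C * (lam / π)) y := by
  by_cases hy : y ∈ Icc (-(π / (2 * lam))) (π / (2 * lam))
  · rw [indicator_of_mem hy, norm_mul, Complex.norm_real, Real.norm_eq_abs]
    exact mul_le_mul (hφ y hy) (abs_fosc_le hlam y) (abs_nonneg _)
      ((norm_nonneg _).trans (hφ y hy))
  · simp [fosc_eq_zero_of_notMem hy, indicator_of_notMem hy]

theorem integrable_mul_fosc (hlam : 0 ≤ lam) (hφm : AEStronglyMeasurable φ)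
    (hφ : ∀ y ∈ Icc (-(π / (2 * lam))) (π / (2 * lam)), ‖φ y‖ ≤ C) :
    Integrable fun y => φ y * fosc lam y :=
  ((integrable_indicator_iff measurableSet_Icc).2 (integrableOn_const measure_Icc_lt_top.ne)).mono'
    (hφm.mul (by fun_prop : Measurable fun y => (fosc lam y : ℂ)).aestronglyMeasurable)
    (Eventually.of_forall (norm_mul_fosc_le_indicator hlam hφ))

theorem norm_integral_mul_fosc_le (hlam : 0 < lam)
    (hφ : ∀ y ∈ Icc (-(π / (2 * lam))) (π / (2 * lam)), ‖φ y‖ ≤ C) :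
    ‖∫ y, φ y * fosc lam y‖ ≤ C := by
  refine (norm_integral_le_of_norm_le ((integrable_indicator_iff measurableSet_Icc).2
    (integrableOn_const measure_Icc_lt_top.ne))
    (Eventually.of_forall (norm_mul_fosc_le_indicator hlam.le hφ))).trans_eq ?_
  rw [integral_indicator_const _ measurableSet_Icc, measureReal_def, Real.volume_Icc,
    ENNReal.toReal_ofReal (by linarith [(by positivity : 0 < π / (2 * lam))]), smul_eq_mul]
  field_simp
  ring

end MulFosc

theorem integral_exp_mul_fosc {lam : ℝ} (hlam : 0 < lam) :
    ∫ y : ℝ, Complex.exp (-(Complex.I * lam) * y) * fosc lam y = -2 * Complex.I / π := by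
  set b := π / (2 * lam)
  set e : ℝ → ℂ := fun y => Complex.exp (-(Complex.I * lam) * y)
  have hb : 0 < b := by positivity
  have he : Continuous e := by fun_prop
  have hsplit : (fun y : ℝ => e y * fosc lam y) = fun y =>
      ((1 / π * lam : ℝ) : ℂ) * ((Icc 0 b).indicator e y - (Icc (-b) 0).indicator e y) := by
    ext y
    simp only [fosc, indicator_apply]
    split_ifs <;> push_cast <;> ring
  have hlamC : (lam : ℂ) ≠ 0 := by exact_mod_cast hlam.ne'
  have hc : -(Complex.I * lam) ≠ 0 := by simp [hlamC]
  have hlb : (lam : ℂ) * (b : ℂ) = π / 2 := by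
    simp only [b]; push_cast; field_simp
  have hIb : ∫ y in Icc 0 b, e y = (-Complex.I - 1) / -(Complex.I * lam) := by
    rw [integral_Icc_eq_integral_Ioc, ← intervalIntegral.integral_of_le hb.le,
      integral_exp_mul_complex hc]
    rw [show -(Complex.I * lam) * (b : ℂ) = -π / 2 * Complex.I by
      linear_combination -Complex.I * hlb]
    simp
  have hIa : ∫ y in Icc (-b) 0, e y = (1 - Complex.I) / -(Complex.I * lam) := by
    rw [integral_Icc_eq_integral_Ioc, ← intervalIntegral.integral_of_le (by linarith),
      integral_exp_mul_complex hc]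
    rw [show -(Complex.I * lam) * ((-b : ℝ) : ℂ) = π / 2 * Complex.I by
      push_cast; linear_combination Complex.I * hlb]
    simp
  rw [hsplit, integral_const_mul, integral_sub
    ((integrable_indicator_iff measurableSet_Icc).2 (he.integrableOn_Icc))
    ((integrable_indicator_iff measurableSet_Icc).2 (he.integrableOn_Icc)),
    integral_indicator measurableSet_Icc, integral_indicator measurableSet_Icc, hIb, hIa]
  push_cast
  field_simp
  linear_combination 2 * Complex.I_sq

theorem tendsto_setIntegral_Ioi_add_of_eq_zero {E : Type*} [NormedAddCommGroup E]
    [NormedSpace ℝ E] {F : ℝ → E} {a δ : ℝ} (hδ : 0 < δ) (hF : ∀ y ≤ a + δ, F y = 0) :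
    Tendsto (fun ε => ∫ y in Ioi (a + ε), F y) (𝓝[>] 0) (𝓝 (∫ y, F y)) := by
  refine tendsto_const_nhds.congr' <| eventuallyEq_of_mem (Ioo_mem_nhdsGT hδ) fun ε hε => ?_
  refine (setIntegral_eq_integral_of_forall_compl_eq_zero fun y hy => hF y ?_).symm
  linarith [not_lt.1 (show ¬ a + ε < y from hy), hε.2]

theorem integrableOn_inv_sq_Iio {c : ℝ} (hc : 0 < c) :
    IntegrableOn (fun x : ℝ => (x ^ 2)⁻¹) (Iio (-c)) := by
  rw [integrableOn_Iio_neg_iff]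
  refine (integrableOn_Ioi_rpow_of_lt (by norm_num : (-2 : ℝ) < -1) hc).congr_fun
    (fun x (hx : c < x) => ?_) measurableSet_Ioi
  beta_reduce
  rw [neg_sq, rpow_neg (by linarith), rpow_two]

theorem norm_integral_oscillatory_sub_le {lam x : ℝ} (hlam : 0 < lam) (hx : x ≤ -(π / lam + 6)) :
    ‖(∫ y : ℝ, Complex.exp (Complex.I * (lam * (x - y))) * Kker (x - y) * fosc lam y) -
      Complex.exp (Complex.I * (lam * x)) * Kker x * (-2 * Complex.I / π)‖ ≤
      6 * π / lam * (x ^ 2)⁻¹ := by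
  set b := π / (2 * lam)
  set e : ℝ → ℂ := fun y => Complex.exp (Complex.I * (lam * (x - y)))
  have hb : 0 < b := by positivity
  have hπb : π / lam = 2 * b := by simp only [b]; field_simp
  rw [hπb] at hx
  have he : ∀ y, ‖e y‖ = 1 := fun y => by
    simp only [e]
    exact_mod_cast Complex.norm_exp_I_mul_ofReal (lam * (x - y))
  have hem : Measurable e := by fun_prop
  have hΔK : ∀ y ∈ Icc (-b) b, |Kker (x - y) - Kker x| ≤ 6 * π / lam * (x ^ 2)⁻¹ := by
    intro y hy
    have hc : exp 1 ≤ -x / 2 := by linarith [exp_one_lt_d9]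
    refine (abs_Kker_sub_Kker_le hc (by linarith [hy.1]) (by linarith)).trans ?_
    rw [sub_sub_cancel_left, abs_neg, mul_div_assoc, hπb]
    have hx2 : 3 / (-x / 2) ^ 2 = 12 * (x ^ 2)⁻¹ := by field_simp; ring
    rw [hx2]
    nlinarith [abs_le.2 hy, inv_pos.2 (by nlinarith : 0 < x ^ 2)]
  have hmain : ∫ y, e y * Kker x * fosc lam y =
      Complex.exp (Complex.I * (lam * x)) * Kker x * (-2 * Complex.I / π) := by
    rw [← integral_exp_mul_fosc hlam, ← integral_const_mul]
    congr 1 with y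
    simp only [e]
    rw [show Complex.I * (lam * (x - y)) = Complex.I * (lam * x) + -(Complex.I * lam) * y by ring,
      Complex.exp_add]
    ring
  have hG := integrable_mul_fosc hlam.le (hem.mul measurable_const).aestronglyMeasurable
    (C := |Kker x|) (φ := fun y => e y * Kker x) (fun y _ => by simp [he])
  have hφD : ∀ y ∈ Icc (-b) b, ‖e y * (Kker (x - y) - Kker x : ℝ)‖ ≤ 6 * π / lam * (x ^ 2)⁻¹ :=
    fun y hy => by rw [norm_mul, he, one_mul, Complex.norm_real, Real.norm_eq_abs]; exact hΔK y hy
  have hD := integrable_mul_fosc hlam.le (by fun_prop) hφD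
  have hsplit : (∫ y : ℝ, e y * Kker (x - y) * fosc lam y) =
      (∫ y, e y * (Kker (x - y) - Kker x : ℝ) * fosc lam y) + ∫ y, e y * Kker x * fosc lam y := by
    rw [← integral_add hD hG]
    congr 1 with y
    push_cast
    ring
  rw [hsplit, hmain, add_sub_cancel_right]
  exact norm_integral_mul_fosc_le hlam hφD

theorem integrableOn_of_integrableOn_exp_mul_mul {f : ℝ → ℝ} {s : Set ℝ} {lam : ℝ} {c : ℂ}
    (hc : c ≠ 0) (hf : Measurable f)
    (h : IntegrableOn (fun x : ℝ => Complex.exp (Complex.I * (lam * x)) * f x * c) s) :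
    IntegrableOn f s := by
  refine (h.norm.const_mul ‖c‖⁻¹).mono' hf.aestronglyMeasurable (ae_of_all _ fun x => ?_)
  have he : ‖Complex.exp (Complex.I * (lam * x))‖ = 1 := by
    exact_mod_cast Complex.norm_exp_I_mul_ofReal (lam * x)
  rw [norm_mul, norm_mul, he, one_mul, Complex.norm_real, mul_comm,
    mul_inv_cancel_right₀ (norm_ne_zero_iff.2 hc)]

/-- Unboundedness when `P'(0) ≠ 0`: with `P(x) = λx`, `λ > 0`, the principal-value
oscillatory integral `T⁺ f(x) = p.v. ∫_x^∞ e^{iλ(x-y)} K(x-y) f(y) dy` of the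
bounded, compactly supported, mean-zero function `f = fosc λ` is not integrable:
`∫_ℝ |T⁺f| = ∞`. -/
theorem oscillatory_not_integrable_of_linear_phase (lam : ℝ) (hlam : 0 < lam)
    (g : ℝ → ℂ)
    (hg : ∀ x : ℝ, Filter.Tendsto
      (fun ε : ℝ => ∫ y in Set.Ioi (x + ε),
        Complex.exp (Complex.I * (lam * (x - y))) * Kker (x - y) * fosc lam y)
      (nhdsWithin 0 (Set.Ioi 0)) (nhds (g x))) :
    ¬ Integrable g := by
  intro hint
  set main : ℝ → ℂ := fun x => Complex.exp (Complex.I * (lam * x)) * Kker x * (-2 * Complex.I / π)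
  have hb : 0 < π / (2 * lam) := by positivity
  have hπ : π / lam = 2 * (π / (2 * lam)) := by field_simp
  have hgx : ∀ x ≤ -(π / lam + 6), g x = ∫ y : ℝ,
      Complex.exp (Complex.I * (lam * (x - y))) * Kker (x - y) * fosc lam y := fun x hx =>
    tendsto_nhds_unique (hg x) <| tendsto_setIntegral_Ioi_add_of_eq_zero one_pos fun y hy => by
      rw [fosc_eq_zero_of_notMem fun hy' => by linarith [hy'.1], Complex.ofReal_zero, mul_zero]
  have herr : IntegrableOn (fun x => g x - main x) (Iio (-(π / lam + 6))) := by
    refine ((integrableOn_inv_sq_Iio (by positivity)).const_mul (6 * π / lam)).mono'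
      (hint.aestronglyMeasurable.sub (by fun_prop)).restrict ?_
    rw [ae_restrict_iff' measurableSet_Iio]
    exact ae_of_all _ fun x (hx : x < _) =>
      hgx x hx.le ▸ norm_integral_oscillatory_sub_le hlam hx.le
  have hmain : IntegrableOn main (Iio (-(π / lam + 6))) :=
    (hint.integrableOn.sub herr).congr_fun (fun x _ => sub_sub_cancel (g x) (main x))
      measurableSet_Iio
  exact not_integrableOn_Kker_Iio (by positivity) <| integrableOn_of_integrableOn_exp_mul_mul
    (c := -2 * Complex.I / π) (by simp) measurable_Kker hmain
end
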